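/- arXiv:2604.01493 — 5 statements merged into one kernel-verified Lean document; each statement's English description precedes it below -/
import Mathlib

section
/- Suppose that φ(q_i) < M_i − 1 for all sufficiently large i. Then there exists an infinite set A ⊆ E such that A + A + A ⊆ E. -/
open Filter Set Metric Pointwise

/-!
Take `A = {1 / q n : n ≥ N}`. Since `q m ∣ q i` for `m ≤ i`, truncating a sum of three elements
of `A` to the terms with `m ≤ i` gives a point of `G i` below it, at distance at most
`3 / q (i + 1)`. The hypothesis `φ (q i) < M i - 1` says exactly that
`q (i + 1) * r i = q i ^ (M i - φ (q i)) ≥ q i ≥ 3` for large `i`, and choosing `N` large handles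
the finitely many remaining levels.
-/

/-- The grid `G_i` of the paper, for `q_i = n`. -/
def grid (n : ℕ) : Set ℝ := {x : ℝ | ∃ k : ℤ, 0 ≤ k ∧ k ≤ (n : ℤ) ∧ x = (k : ℝ) / (n : ℝ)}

/-- The set `E_i` of the paper, for `q_i = n` and `r_i = ρ`. -/
def gridNbhd (n : ℕ) (ρ : ℝ) : Set ℝ := {x ∈ Icc (0 : ℝ) 1 | infDist x (grid n) ≤ ρ}

theorem Int.fract_le_self_of_nonneg {R : Type*} [Ring R] [LinearOrder R] [FloorRing R]
    [IsOrderedRing R] {a : R} (ha : 0 ≤ a) : Int.fract a ≤ a :=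
  sub_le_self _ (Int.cast_nonneg (Int.floor_nonneg.2 ha))

theorem infDist_grid_le_fract {n : ℕ} (hn : 0 < n) {y : ℝ} (hy : y ∈ Icc (0 : ℝ) 1) :
    infDist y (grid n) ≤ Int.fract (n * y) / n := by
  have hn' : (0 : ℝ) < n := Nat.cast_pos.2 hn
  have hfloor : (⌊n * y⌋ : ℝ) ≤ n * y := Int.floor_le _
  have hle : (⌊n * y⌋ : ℝ) ≤ n := hfloor.trans (by nlinarith [hy.2])
  have hmem : (⌊n * y⌋ : ℝ) / n ∈ grid n :=
    ⟨⌊n * y⌋, Int.floor_nonneg.2 (by nlinarith [hy.1]), by exact_mod_cast hle, rfl⟩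
  have hgap : y - ⌊n * y⌋ / n = Int.fract (n * y) / n := by
    rw [Int.fract]
    field_simp
  calc infDist y (grid n) ≤ dist y (⌊n * y⌋ / n) := infDist_le_dist_of_mem hmem
    _ = Int.fract (n * y) / n := by
      rw [Real.dist_eq, hgap, abs_of_nonneg (div_nonneg (Int.fract_nonneg _) hn'.le)]

theorem mem_gridNbhd_of_fract_le {n : ℕ} (hn : 0 < n) {ρ y : ℝ} (hy : y ∈ Icc (0 : ℝ) 1)
    (h : Int.fract (n * y) ≤ n * ρ) : y ∈ gridNbhd n ρ := by
  refine ⟨hy, (infDist_grid_le_fract hn hy).trans ?_⟩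
  rwa [div_le_iff₀' (Nat.cast_pos.2 hn)]

theorem add_add_mem_gridNbhd {n : ℕ} (hn : 0 < n) {δ ε ρ : ℝ} (hδ : 3 * δ ≤ 1)
    (hερ : 3 * ε ≤ ρ) {s t u : ℝ} (hs : s ∈ Icc 0 δ) (ht : t ∈ Icc 0 δ) (hu : u ∈ Icc 0 δ)
    (hfs : Int.fract (n * s) ≤ n * ε) (hft : Int.fract (n * t) ≤ n * ε)
    (hfu : Int.fract (n * u) ≤ n * ε) : s + t + u ∈ gridNbhd n ρ := by
  refine mem_gridNbhd_of_fract_le hn ⟨by linarith [hs.1, ht.1, hu.1], by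
    linarith [hs.2, ht.2, hu.2]⟩ ?_
  have hn' : (0 : ℝ) ≤ n := Nat.cast_nonneg n
  calc Int.fract (n * (s + t + u))
      ≤ Int.fract (n * s) + Int.fract (n * t) + Int.fract (n * u) := by
        rw [mul_add, mul_add]
        exact (Int.fract_add_le _ _).trans (add_le_add_left (Int.fract_add_le _ _) _)
    _ ≤ n * ρ := by nlinarith

/-- The points of `[0, δ]` lying at most `ε i` above a point of `(1 / q i) ℤ`, for every `i`. -/
def approxBelow (q : ℕ → ℕ) (δ : ℝ) (ε : ℕ → ℝ) : Set ℝ :=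
  {t | t ∈ Icc 0 δ ∧ ∀ i, Int.fract (q i * t) ≤ q i * ε i}

theorem zero_mem_approxBelow {q : ℕ → ℕ} {δ : ℝ} (hδ : 0 ≤ δ) {ε : ℕ → ℝ} (hε : ∀ i, 0 ≤ ε i) :
    0 ∈ approxBelow q δ ε :=
  ⟨⟨le_rfl, hδ⟩, fun i => by simpa using mul_nonneg (Nat.cast_nonneg (q i)) (hε i)⟩

theorem approxBelow_add_add_subset {q : ℕ → ℕ} (hq : ∀ i, 0 < q i) {δ : ℝ} (hδ : 3 * δ ≤ 1)
    {ε r : ℕ → ℝ} (hεr : ∀ i, 3 * ε i ≤ r i) :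
    approxBelow q δ ε + approxBelow q δ ε + approxBelow q δ ε ⊆ ⋂ i, gridNbhd (q i) (r i) := by
  rintro _ ⟨_, ⟨s, hs, t, ht, rfl⟩, u, hu, rfl⟩
  exact mem_iInter.2 fun i => add_add_mem_gridNbhd (hq i) hδ (hεr i) hs.1 ht.1 hu.1
    (hs.2 i) (ht.2 i) (hu.2 i)

section Tower

variable {M q : ℕ → ℕ}

theorem tower_monotone (hM : ∀ i, 0 < M i) (hq : ∀ i, q (i + 1) = q i ^ M i) : Monotone q :=
  monotone_nat_of_le_succ fun i => (hq i).symm ▸ Nat.le_self_pow (hM i).ne' _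

theorem tower_dvd_of_le (hM : ∀ i, 0 < M i) (hq : ∀ i, q (i + 1) = q i ^ M i) {i j : ℕ}
    (hij : i ≤ j) : q i ∣ q j := by
  induction j, hij using Nat.le_induction with
  | base => exact dvd_rfl
  | succ k _ ih => exact (hq k).symm ▸ ih.trans (dvd_pow_self _ (hM k).ne')

theorem tendsto_tower (hq : ∀ i, q (i + 1) = q i ^ M i) (hq2 : ∀ i, 2 ≤ q i)
    (hMtop : Tendsto M atTop atTop) : Tendsto q atTop atTop := by
  refine (tendsto_add_atTop_iff_nat 1).1 <| tendsto_atTop_mono (fun i => ?_) hMtop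
  calc M i ≤ 2 ^ M i := Nat.lt_two_pow_self.le
    _ ≤ q (i + 1) := (hq i).symm ▸ Nat.pow_le_pow_left (hq2 i) _

/-- For `m ≤ i` the left side vanishes since `q m ∣ q i`; otherwise `max (i + 1) N ≤ m`. -/
theorem fract_tower_div_le (hM : ∀ i, 0 < M i) (hq : ∀ i, q (i + 1) = q i ^ M i)
    (hpos : ∀ i, 0 < q i) {N m : ℕ} (hm : N ≤ m) (i : ℕ) :
    Int.fract ((q i : ℝ) * (q m : ℝ)⁻¹) ≤ q i * (q (max (i + 1) N) : ℝ)⁻¹ := by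
  have hpos' : ∀ j, (0 : ℝ) < q j := fun j => Nat.cast_pos.2 (hpos j)
  rcases le_or_gt m i with hmi | him
  · rw [← div_eq_mul_inv, ← Nat.cast_div (tower_dvd_of_le hM hq hmi) (hpos' m).ne',
      Int.fract_natCast]
    exact mul_nonneg (hpos' i).le (inv_pos.2 (hpos' _)).le
  · refine (Int.fract_le_self_of_nonneg ?_).trans ?_
    · exact mul_nonneg (hpos' i).le (inv_pos.2 (hpos' m)).le
    gcongr
    · exact hpos' _
    · exact tower_monotone hM hq (max_le him hm)

theorem image_inv_tower_subset_approxBelow (hM : ∀ i, 0 < M i) (hq : ∀ i, q (i + 1) = q i ^ M i)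
    (hpos : ∀ i, 0 < q i) (N : ℕ) :
    (fun k : ℕ => (k : ℝ)⁻¹) '' (q '' Ici N) ⊆
      approxBelow q (q N : ℝ)⁻¹ fun i => (q (max (i + 1) N) : ℝ)⁻¹ := by
  rintro _ ⟨_, ⟨m, hm, rfl⟩, rfl⟩
  have hqm : (0 : ℝ) < q m := Nat.cast_pos.2 (hpos m)
  exact ⟨⟨(inv_pos.2 hqm).le, inv_anti₀ (Nat.cast_pos.2 (hpos N))
    (Nat.cast_le.2 (tower_monotone hM hq hm))⟩, fract_tower_div_le hM hq hpos hm⟩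

end Tower

theorem div_pow_le_rpow_neg {b c ψ : ℝ} {n : ℕ} (hcb : c ≤ b) (hb : 1 ≤ b) (hψ : ψ ≤ n - 1) :
    c / b ^ n ≤ b ^ (-ψ) := by
  rw [div_le_iff₀ (by positivity), ← Real.rpow_natCast, ← Real.rpow_add (by linarith)]
  calc c ≤ b := hcb
    _ = b ^ (1 : ℝ) := (Real.rpow_one b).symm
    _ ≤ b ^ (-ψ + n) := Real.rpow_le_rpow_of_exponent_le hb (by linarith)

theorem eventually_forall_div_max_le {q : ℕ → ℕ} (hmono : Monotone q) (hpos : ∀ i, 0 < q i)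
    (htop : Tendsto q atTop atTop) {r : ℕ → ℝ} (hr : ∀ i, 0 < r i) {c : ℝ} (hc : 0 ≤ c)
    (h : ∀ᶠ i in atTop, c / q (i + 1) ≤ r i) :
    ∀ᶠ N in atTop, ∀ i, c / q (max (i + 1) N) ≤ r i := by
  obtain ⟨J, hJ⟩ := eventually_atTop.1 h
  have hsmall : ∀ᶠ N in atTop, ∀ i ∈ Iio J, c / q N ≤ r i :=
    (eventually_all_finite (finite_Iio J)).2 fun i _ =>
      ((tendsto_const_div_atTop_nhds_zero_nat c).comp htop).eventually (ge_mem_nhds (hr i))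
  have hpos' : ∀ j, (0 : ℝ) < q j := fun j => Nat.cast_pos.2 (hpos j)
  filter_upwards [hsmall] with N hN i
  rcases lt_or_ge i J with hiJ | hJi
  · refine le_trans ?_ (hN i hiJ)
    gcongr
    · exact hpos' _
    · exact hmono (le_max_right _ _)
  · refine le_trans ?_ (hJ i hJi)
    gcongr
    · exact hpos' _
    · exact hmono (le_max_left _ _)

/-- Indices are shifted so that the paper's `q_1 = 2` corresponds to `q 0 = 2`. -/
theorem falconer_triple_sumset_general
    (M : ℕ → ℕ) (hMpos : ∀ i, 0 < M i)
    (hMtop : Tendsto M atTop atTop)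
    (q : ℕ → ℕ) (hq0 : q 0 = 2) (hqrec : ∀ i, q (i + 1) = q i ^ M i)
    (φ : ℝ → ℝ)
    (G : ℕ → Set ℝ)
    (hG : ∀ i, G i = {x : ℝ | ∃ k : ℤ, 0 ≤ k ∧ k ≤ (q i : ℤ) ∧ x = (k : ℝ) / (q i : ℝ)})
    (r : ℕ → ℝ) (hr : ∀ i, r i = (q i : ℝ) ^ (-φ ((q i : ℕ) : ℝ)))
    (Ei : ℕ → Set ℝ)
    (hEi : ∀ i, Ei i = {x ∈ Set.Icc (0 : ℝ) 1 | Metric.infDist x (G i) ≤ r i})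
    (E : Set ℝ) (hE : E = ⋂ i, Ei i)
    (hyp : ∀ᶠ i in atTop, φ ((q i : ℕ) : ℝ) < (M i : ℝ) - 1) :
    ∃ A : Set ℝ, A.Infinite ∧ A ⊆ E ∧ A + A + A ⊆ E := by
  obtain rfl : G = fun i => grid (q i) := funext hG
  obtain rfl : Ei = fun i => gridNbhd (q i) (r i) := funext hEi
  subst hE
  have hq2 : ∀ i, 2 ≤ q i := fun i => hq0 ▸ tower_monotone hMpos hqrec (Nat.zero_le i)
  have hpos : ∀ i, 0 < q i := fun i => two_pos.trans_le (hq2 i)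
  have hqtop := tendsto_tower hqrec hq2 hMtop
  have hkey : ∀ᶠ i in atTop, 3 / q (i + 1) ≤ r i := by
    filter_upwards [hyp, hqtop.eventually_ge_atTop 3] with i hφ hi3
    rw [hr, hqrec, Nat.cast_pow]
    exact div_pow_le_rpow_neg (by exact_mod_cast hi3) (by exact_mod_cast (hpos i)) hφ.le
  have hrpos : ∀ i, 0 < r i := fun i => hr i ▸ Real.rpow_pos_of_pos (Nat.cast_pos.2 (hpos i)) _
  obtain ⟨N, hN, hN3⟩ := ((eventually_forall_div_max_le (tower_monotone hMpos hqrec) hpos hqtop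
    hrpos (by norm_num) hkey).and (hqtop.eventually_ge_atTop 3)).exists
  have hqN : (0 : ℝ) < q N := Nat.cast_pos.2 (hpos N)
  set S := approxBelow q (q N : ℝ)⁻¹ fun i => (q (max (i + 1) N) : ℝ)⁻¹
  have hSSS : S + S + S ⊆ ⋂ i, gridNbhd (q i) (r i) := by
    refine approxBelow_add_add_subset hpos ?_ fun i => (div_eq_mul_inv _ _).symm.trans_le (hN i)
    rw [← div_eq_mul_inv, div_le_one hqN]
    exact_mod_cast hN3
  have h0 : (0 : ℝ) ∈ S :=
    zero_mem_approxBelow (inv_pos.2 hqN).le fun i => (inv_pos.2 (Nat.cast_pos.2 (hpos _))).le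
  have hAS := image_inv_tower_subset_approxBelow hMpos hqrec hpos N
  have hqA : (q '' Ici N).Infinite := infinite_of_forall_exists_gt fun a =>
    let ⟨m, hma, hmN⟩ := ((hqtop.eventually_gt_atTop a).and (eventually_ge_atTop N)).exists
    ⟨q m, mem_image_of_mem q hmN, hma⟩
  refine ⟨_, hqA.image (inv_injective.comp Nat.cast_injective).injOn, ?_, ?_⟩
  · exact hAS.trans <| (subset_add_left S h0).trans <| (subset_add_left _ h0).trans hSSS
  · exact (add_subset_add (add_subset_add hAS hAS) hAS).trans hSSS

/-- Modified Falconer construction. If `φ(q i) < M i - 1` for all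
sufficiently large `i`, then there exists an infinite set `A ⊆ E` with `A + A + A ⊆ E`.
(Indices are shifted so that the paper's `q_1 = 2` corresponds to `q 0 = 2`.) -/
theorem falconer_triple_sumset
    (M : ℕ → ℕ) (hMpos : ∀ i, 0 < M i) (hMmono : Monotone M)
    (hMtop : Tendsto M atTop atTop)
    (q : ℕ → ℕ) (hq0 : q 0 = 2) (hqrec : ∀ i, q (i + 1) = q i ^ M i)
    (φ : ℝ → ℝ) (hφpos : ∀ t : ℝ, 2 ≤ t → 0 < φ t)
    (hφmono : MonotoneOn φ (Set.Ici (2 : ℝ)))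
    (hφtop : Tendsto φ atTop atTop)
    (G : ℕ → Set ℝ)
    (hG : ∀ i, G i = {x : ℝ | ∃ k : ℤ, 0 ≤ k ∧ k ≤ (q i : ℤ) ∧ x = (k : ℝ) / (q i : ℝ)})
    (r : ℕ → ℝ) (hr : ∀ i, r i = (q i : ℝ) ^ (-φ ((q i : ℕ) : ℝ)))
    (Ei : ℕ → Set ℝ)
    (hEi : ∀ i, Ei i = {x ∈ Set.Icc (0 : ℝ) 1 | Metric.infDist x (G i) ≤ r i})
    (E : Set ℝ) (hE : E = ⋂ i, Ei i)
    (hyp : ∀ᶠ i in atTop, φ ((q i : ℕ) : ℝ) < (M i : ℝ) - 1) :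
    ∃ A : Set ℝ, A.Infinite ∧ A ⊆ E ∧ A + A + A ⊆ E :=
  falconer_triple_sumset_general M hMpos hMtop q hq0 hqrec φ G hG r hr Ei hEi E hE hyp
end

section
/- Suppose that φ(q_i) < M_i − 1 for all sufficiently large i. Then E satisfies the conclusion of the Erdős similarity conjecture: there exists a Lebesgue-measurable set S ⊆ ℝ of positive Lebesgue measure such that for every x ∈ ℝ and every t ∈ ℝ with t ≠ 0, the affine copy x + t·E = {x + t·e : e ∈ E} is not contained in S. -/
open Filter Set Metric Pointwise

set_option maxHeartbeats 1000000 in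
/-- Under the hypothesis `φ(q i) < M i - 1` eventually, the set `E`
satisfies the conclusion of the Erdős similarity conjecture: there is a measurable
set `S ⊆ ℝ` of positive Lebesgue measure containing no nontrivial affine copy of `E`. -/
theorem falconer_erdos_similarity
    (M : ℕ → ℕ) (hMpos : ∀ i, 0 < M i) (hMmono : Monotone M)
    (hMtop : Tendsto M atTop atTop)
    (q : ℕ → ℕ) (hq0 : q 0 = 2) (hqrec : ∀ i, q (i + 1) = q i ^ M i)
    (φ : ℝ → ℝ) (hφpos : ∀ t : ℝ, 2 ≤ t → 0 < φ t)
    (hφmono : MonotoneOn φ (Set.Ici (2 : ℝ)))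
    (hφtop : Tendsto φ atTop atTop)
    (G : ℕ → Set ℝ)
    (hG : ∀ i, G i = {x : ℝ | ∃ k : ℤ, 0 ≤ k ∧ k ≤ (q i : ℤ) ∧ x = (k : ℝ) / (q i : ℝ)})
    (r : ℕ → ℝ) (hr : ∀ i, r i = (q i : ℝ) ^ (-φ ((q i : ℕ) : ℝ)))
    (Ei : ℕ → Set ℝ)
    (hEi : ∀ i, Ei i = {x ∈ Set.Icc (0 : ℝ) 1 | Metric.infDist x (G i) ≤ r i})
    (E : Set ℝ) (hE : E = ⋂ i, Ei i)
    (hyp : ∀ᶠ i in atTop, φ ((q i : ℕ) : ℝ) < (M i : ℝ) - 1) :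
    ∃ S : Set ℝ, MeasurableSet S ∧ 0 < MeasureTheory.volume S ∧
      ∀ x t : ℝ, t ≠ 0 → ¬ ((fun e => x + t * e) '' E ⊆ S) := by
  classical
  -- ## Basic facts about q
  have hq2 : ∀ i, 2 ≤ q i := by
    intro i
    induction i with
    | zero => exact hq0 ▸ le_rfl
    | succ n ih =>
      rw [hqrec n]
      calc 2 ≤ q n := ih
        _ = q n ^ 1 := (pow_one _).symm
        _ ≤ q n ^ M n := Nat.pow_le_pow_right (by omega) (hMpos n)
  have hqpos : ∀ i, (0 : ℝ) < (q i : ℝ) := fun i => by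
    have := hq2 i; positivity
  have hq1le : ∀ i, (1 : ℝ) ≤ (q i : ℝ) := fun i => by
    have := hq2 i; exact_mod_cast le_trans (by norm_num) this
  have h2q : ∀ i, (2 : ℝ) ≤ (q i : ℝ) := fun i => by exact_mod_cast hq2 i
  have hqstep : ∀ n, q n ≤ q (n + 1) := fun n => by
    rw [hqrec n]
    exact Nat.le_self_pow (hMpos n).ne' _
  have hqmono : ∀ m n, m ≤ n → q m ≤ q n := by
    intro m n h
    induction n, h using Nat.le_induction with
    | base => exact le_rfl
    | succ n hmn ih => exact le_trans ih (hqstep n)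
  have hqdvd : ∀ m n, m ≤ n → q m ∣ q n := by
    intro m n h
    induction n, h using Nat.le_induction with
    | base => exact dvd_rfl
    | succ n hmn ih =>
      refine dvd_trans ih ?_
      rw [hqrec n]
      exact dvd_pow_self _ (hMpos n).ne'
  -- ## Basic facts about r
  have hφq : ∀ i, 0 < φ ((q i : ℕ) : ℝ) := fun i => hφpos _ (h2q i)
  have hrpos : ∀ i, 0 < r i := fun i => by
    rw [hr]; exact Real.rpow_pos_of_pos (hqpos i) _
  have hrle1 : ∀ i, r i ≤ 1 := fun i => by
    rw [hr]
    exact Real.rpow_le_one_of_one_le_of_nonpos (hq1le i) (neg_nonpos.mpr (hφq i).le)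
  have hrmono : ∀ m n, m ≤ n → r n ≤ r m := by
    intro m n h
    rw [hr, hr]
    have hqmn : (q m : ℝ) ≤ (q n : ℝ) := by exact_mod_cast hqmono m n h
    have hφmn : φ ((q m : ℕ) : ℝ) ≤ φ ((q n : ℕ) : ℝ) :=
      hφmono (mem_Ici.mpr (h2q m)) (mem_Ici.mpr (h2q n)) hqmn
    calc (q n : ℝ) ^ (-φ ((q n : ℕ) : ℝ))
        ≤ (q n : ℝ) ^ (-φ ((q m : ℕ) : ℝ)) :=
          Real.rpow_le_rpow_of_exponent_le (hq1le n) (neg_le_neg hφmn)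
      _ ≤ (q m : ℝ) ^ (-φ ((q m : ℕ) : ℝ)) := by
          rw [Real.rpow_neg (hqpos n).le, Real.rpow_neg (hqpos m).le]
          have h1 : (q m : ℝ) ^ (φ ((q m : ℕ) : ℝ)) ≤ (q n : ℝ) ^ (φ ((q m : ℕ) : ℝ)) :=
            Real.rpow_le_rpow (hqpos m).le hqmn (hφq m).le
          have h2 : (0 : ℝ) < (q m : ℝ) ^ (φ ((q m : ℕ) : ℝ)) :=
            Real.rpow_pos_of_pos (hqpos m) _
          exact inv_anti₀ h2 h1
  -- ## Membership criteria for E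
  have hGzero : ∀ n, (0 : ℝ) ∈ G n := fun n => by
    rw [hG]
    exact ⟨0, le_rfl, by positivity, by norm_num⟩
  have hmemE : ∀ y : ℝ, y ∈ Icc (0 : ℝ) 1 → (∀ n, infDist y (G n) ≤ r n) → y ∈ E := by
    intro y hy h
    rw [hE]
    exact mem_iInter.mpr fun n => by rw [hEi]; exact ⟨hy, h n⟩
  have h0E : (0 : ℝ) ∈ E := by
    refine hmemE 0 ⟨le_rfl, zero_le_one⟩ fun n => ?_
    refine le_trans (infDist_le_dist_of_mem (hGzero n)) ?_
    rw [dist_self]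
    exact (hrpos n).le
  have h1E : (1 : ℝ) ∈ E := by
    refine hmemE 1 ⟨zero_le_one, le_rfl⟩ fun n => ?_
    have h1G : (1 : ℝ) ∈ G n := by
      rw [hG]
      refine ⟨(q n : ℤ), by positivity, le_rfl, ?_⟩
      rw [Int.cast_natCast]
      exact (div_self (ne_of_gt (hqpos n))).symm
    refine le_trans (infDist_le_dist_of_mem h1G) ?_
    rw [dist_self]
    exact (hrpos n).le
  -- ## The eventual hypothesis and unboundedness of q
  obtain ⟨N₀, hN₀⟩ := eventually_atTop.1 hyp
  obtain ⟨N₁, hN₁⟩ := eventually_atTop.1 (hMtop.eventually_ge_atTop 2)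
  have hqub : ∀ B : ℕ, ∃ i, N₀ ≤ i ∧ B ≤ q i := by
    intro B
    set m := max N₀ N₁ with hm
    have key : ∀ n : ℕ, n + 2 ≤ q (m + n) := by
      intro n
      induction n with
      | zero => exact hq2 m
      | succ n ih =>
        have hM2 : 2 ≤ M (m + n) := hN₁ _ (le_trans (le_max_right N₀ N₁) (Nat.le_add_right m n))
        have hstep : q (m + (n + 1)) = q (m + n) ^ M (m + n) := hqrec (m + n)
        rw [hstep]
        calc n + 1 + 2 ≤ (n + 2) * (n + 2) := by nlinarith
          _ ≤ q (m + n) * q (m + n) := Nat.mul_le_mul ih ih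
          _ = q (m + n) ^ 2 := (pow_two _).symm
          _ ≤ q (m + n) ^ M (m + n) := Nat.pow_le_pow_right (by have := hq2 (m + n); omega) hM2
    exact ⟨m + B, le_trans (le_max_left N₀ N₁) (Nat.le_add_right m B),
      le_trans (by omega) (key B)⟩
  -- ## Key structural lemma: arbitrarily long arithmetic progressions in E
  have hA : ∀ C : ℕ, ∃ g : ℝ, ∃ K : ℕ, 0 < g ∧ C ≤ K ∧ (K : ℝ) * g ≤ 1 ∧
      ∀ j : ℕ, j ≤ K → (j : ℝ) * g ∈ E := by
    intro C
    obtain ⟨i, hiN₀, hiC⟩ := hqub C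
    have hyi : φ ((q i : ℕ) : ℝ) < (M i : ℝ) - 1 := hN₀ i hiN₀
    have hQpos : (0 : ℝ) < (q (i + 1) : ℝ) := hqpos (i + 1)
    -- key estimate: C ≤ q_{i+1} * r_i
    have hkey : (C : ℝ) ≤ (q (i + 1) : ℝ) * r i := by
      have e1 : ((q (i + 1) : ℕ) : ℝ) = ((q i : ℝ)) ^ (M i : ℕ) := by
        rw [hqrec i]; push_cast; ring
      have e2 : (q (i + 1) : ℝ) * r i = (q i : ℝ) ^ ((M i : ℝ) - φ ((q i : ℕ) : ℝ)) := by
        rw [hr, e1, ← Real.rpow_natCast ((q i : ℝ)) (M i), ← Real.rpow_add (hqpos i)]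
        ring_nf
      rw [e2]
      have h1 : (1 : ℝ) ≤ (M i : ℝ) - φ ((q i : ℕ) : ℝ) := by linarith
      calc (C : ℝ) ≤ (q i : ℝ) := by exact_mod_cast hiC
        _ = (q i : ℝ) ^ (1 : ℝ) := (Real.rpow_one _).symm
        _ ≤ _ := Real.rpow_le_rpow_of_exponent_le (hq1le i) h1
    refine ⟨((q (i + 1) : ℝ))⁻¹, C, inv_pos.mpr hQpos, le_rfl, ?_, ?_⟩
    · have h1 : (C : ℝ) * ((q (i + 1) : ℝ))⁻¹ ≤ r i := by
        rw [← div_eq_mul_inv, div_le_iff₀ hQpos]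
        linarith [hkey]
      linarith [hrle1 i]
    · intro j hj
      have hjC : (j : ℝ) ≤ (C : ℝ) := by exact_mod_cast hj
      have hjr : (j : ℝ) * ((q (i + 1) : ℝ))⁻¹ ≤ r i := by
        rw [← div_eq_mul_inv, div_le_iff₀ hQpos]
        have : (C : ℝ) ≤ r i * (q (i + 1) : ℝ) := by linarith [hkey]
        linarith
      have hy0 : (0 : ℝ) ≤ (j : ℝ) * ((q (i + 1) : ℝ))⁻¹ := by positivity
      apply hmemE
      · exact ⟨hy0, le_trans hjr (hrle1 i)⟩
      · intro n
        rcases le_or_gt n i with hni | hin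
        · refine le_trans (infDist_le_dist_of_mem (hGzero n)) ?_
          rw [dist_zero_right, Real.norm_eq_abs, abs_of_nonneg hy0]
          exact le_trans hjr (hrmono n i hni)
        · -- n ≥ i+1 : the point is itself in the grid G n
          have hin' : i + 1 ≤ n := hin
          have hdvd := hqdvd (i + 1) n hin'
          set D := q n / q (i + 1) with hDdef
          have hD : q (i + 1) * D = q n := Nat.mul_div_cancel' hdvd
          have hDpos : 0 < D := by
            rcases Nat.eq_zero_or_pos D with h | h
            · exfalso; rw [h, Nat.mul_zero] at hD; have := hq2 n; omega
            · exact h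
          have hjq : j ≤ q (i + 1) := by
            have h1 : C ≤ q i := hiC
            have h2 : q i ≤ q (i + 1) := hqstep i
            omega
          have hyG : (j : ℝ) * ((q (i + 1) : ℝ))⁻¹ ∈ G n := by
            rw [hG]
            refine ⟨((j * D : ℕ) : ℤ), by positivity, ?_, ?_⟩
            · have : j * D ≤ q n := by
                calc j * D ≤ q (i + 1) * D := Nat.mul_le_mul_right _ hjq
                  _ = q n := hD
              exact_mod_cast this
            · have hQn : (q n : ℝ) = (q (i + 1) : ℝ) * (D : ℝ) := by exact_mod_cast hD.symm
              rw [Int.cast_natCast, hQn]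
              push_cast
              have hD0 : (D : ℝ) ≠ 0 := by positivity
              have hQ0 : (q (i + 1) : ℝ) ≠ 0 := ne_of_gt hQpos
              field_simp
          refine le_trans (infDist_le_dist_of_mem hyG) ?_
          rw [dist_self]
          exact (hrpos n).le
  -- ## Choose the data for each dyadic scale k
  have hchoice : ∀ k : ℕ, ∃ g : ℝ, ∃ K : ℕ, 0 < g ∧ 4 ^ (k + 4) ≤ K ∧ (K : ℝ) * g ≤ 1 ∧
      ∀ j : ℕ, j ≤ K → (j : ℝ) * g ∈ E := fun k => hA (4 ^ (k + 4))
  choose g K hgpos hKge hKg hmem using hchoice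
  have hKposN : ∀ k, 0 < K k := fun k => lt_of_lt_of_le (by positivity) (hKge k)
  have hKpos : ∀ k, (0 : ℝ) < (K k : ℝ) := fun k => by exact_mod_cast hKposN k
  -- the grid spacing ℓ and number of balls N
  set L : ℕ → ℝ := fun k => (K k : ℝ) * g k * (1 / 2) ^ k with hLdef
  have hLpos : ∀ k, 0 < L k := fun k => by
    have := hgpos k; have := hKpos k
    simp only [hLdef]
    positivity
  set NB : ℕ → ℕ := fun k => ⌈(2 : ℝ) / L k⌉₊ with hNBdef
  set U : ℕ → Set ℝ := fun k =>
    ⋃ s ∈ Finset.Icc (-(NB k : ℤ)) (NB k : ℤ), Metric.closedBall ((s : ℝ) * L k) (g k)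
      with hUdef
  refine ⟨Icc (0 : ℝ) 1 \ ⋃ k, U k, ?_, ?_, ?_⟩
  · -- measurability
    refine (measurableSet_Icc).diff (MeasurableSet.iUnion fun k => ?_)
    exact (Finset.Icc (-(NB k : ℤ)) (NB k : ℤ)).measurableSet_biUnion
      fun s _ => measurableSet_closedBall
  · -- positive measure
    -- per-scale bound
    have hUk : ∀ k, MeasureTheory.volume (U k) ≤ ENNReal.ofReal ((1 / 16) * (1 / 2) ^ k) := by
      intro k
      have hgk := hgpos k
      have hKk := hKpos k
      have hLk := hLpos k
      have hcard : (Finset.Icc (-(NB k : ℤ)) (NB k : ℤ)).card = 2 * NB k + 1 := by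
        rw [Int.card_Icc]
        omega
      have hstep1 : MeasureTheory.volume (U k) ≤
          ((2 * NB k + 1 : ℕ) : ENNReal) * ENNReal.ofReal (2 * g k) := by
        refine le_trans (MeasureTheory.measure_biUnion_finset_le _ _) ?_
        have : ∀ s ∈ Finset.Icc (-(NB k : ℤ)) (NB k : ℤ),
            MeasureTheory.volume (Metric.closedBall ((s : ℝ) * L k) (g k)) =
              ENNReal.ofReal (2 * g k) := fun s _ => Real.volume_closedBall _ _
        rw [Finset.sum_congr rfl this, Finset.sum_const, hcard, nsmul_eq_mul]
      refine le_trans hstep1 ?_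
      rw [← ENNReal.ofReal_natCast (2 * NB k + 1), ← ENNReal.ofReal_mul (by positivity)]
      refine ENNReal.ofReal_le_ofReal ?_
      -- real arithmetic
      set P : ℝ := 2 ^ k with hP
      have hPpos : (0 : ℝ) < P := by positivity
      have hP1 : (1 : ℝ) ≤ P := by
        rw [hP]
        exact_mod_cast Nat.one_le_two_pow (n := k)
      have hhalf : ((1 : ℝ) / 2) ^ k = 1 / P := by
        rw [div_pow, one_pow]
      have hK4 : (256 : ℝ) * (P * P) ≤ (K k : ℝ) := by
        have h1 : ((4 : ℕ) ^ (k + 4) : ℝ) ≤ (K k : ℝ) := by exact_mod_cast hKge k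
        have h2 : ((4 : ℕ) ^ (k + 4) : ℝ) = 256 * (P * P) := by
          push_cast
          rw [pow_add, hP]
          rw [show (4 : ℝ) = 2 * 2 by norm_num, mul_pow]
          ring
        linarith [h2 ▸ h1]
      have hgle : g k ≤ 1 / (K k : ℝ) := by
        rw [le_div_iff₀ (hKpos k)]
        have := hKg k
        linarith
      have hLk' : L k = (K k : ℝ) * g k / P := by
        rw [hLdef]
        simp only
        rw [hhalf]
        ring
      have hNBlt : ((NB k : ℕ) : ℝ) < 2 / L k + 1 := by
        have : ((⌈(2 : ℝ) / L k⌉₊ : ℕ) : ℝ) < 2 / L k + 1 :=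
          Nat.ceil_lt_add_one (by positivity)
        simpa [hNBdef] using this
      have h2L : 2 / L k = 2 * P / ((K k : ℝ) * g k) := by
        rw [hLk']
        field_simp
      have hT1 : ((2 * NB k + 1 : ℕ) : ℝ) * (2 * g k) ≤
          (2 * (2 / L k + 1) + 1) * (2 * g k) := by
        have h1 : ((2 * NB k + 1 : ℕ) : ℝ) = 2 * ((NB k : ℕ) : ℝ) + 1 := by push_cast; ring
        rw [h1]
        nlinarith [hNBlt, hgk]
      have hT2 : (2 * (2 / L k + 1) + 1) * (2 * g k) = 8 * P / (K k : ℝ) + 6 * g k := by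
        rw [h2L]
        field_simp
        ring
      have hT3 : 8 * P / (K k : ℝ) ≤ 8 * P / (256 * (P * P)) := by
        apply div_le_div_of_nonneg_left (by positivity) (by positivity) hK4
      have hT4 : 6 * g k ≤ 6 / (256 * (P * P)) := by
        calc 6 * g k ≤ 6 * (1 / (K k : ℝ)) := by nlinarith [hgle]
          _ = 6 / (K k : ℝ) := by ring
          _ ≤ 6 / (256 * (P * P)) :=
            div_le_div_of_nonneg_left (by norm_num) (by positivity) hK4
      have hT5 : 8 * P / (256 * (P * P)) = (1 / 32) * (1 / P) := by
        field_simp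
        ring
      have hT6 : 6 / (256 * (P * P)) ≤ (1 / 32) * (1 / P) := by
        rw [div_le_iff₀ (by positivity)]
        have : (1 : ℝ) / 32 * (1 / P) * (256 * (P * P)) = 8 * P := by
          field_simp
          ring
        rw [this]
        nlinarith [hP1]
      rw [hhalf]
      have hfin : ((2 * NB k + 1 : ℕ) : ℝ) * (2 * g k) ≤ 8 * P / (K k : ℝ) + 6 * g k :=
        hT1.trans (le_of_eq hT2)
      linarith [hT3, hT4, hT5, hT6, hfin]
    -- total bound
    have hUtot : MeasureTheory.volume (⋃ k, U k) ≤ ENNReal.ofReal (1 / 8) := by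
      refine le_trans (MeasureTheory.measure_iUnion_le _) ?_
      have h1 : ∀ k : ℕ, MeasureTheory.volume (U k) ≤
          ENNReal.ofReal (1 / 16) * (ENNReal.ofReal (1 / 2)) ^ k := by
        intro k
        refine le_trans (hUk k) ?_
        rw [ENNReal.ofReal_mul (by norm_num), ENNReal.ofReal_pow (by norm_num)]
      refine le_trans (ENNReal.tsum_le_tsum h1) ?_
      rw [ENNReal.tsum_mul_left, ENNReal.tsum_geometric]
      have h2 : ENNReal.ofReal (1 / 2) = 2⁻¹ := by
        rw [show (1 : ℝ) / 2 = 2⁻¹ by norm_num,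
          ENNReal.ofReal_inv_of_pos (by norm_num : (0 : ℝ) < 2)]
        norm_num
      rw [h2]
      have h3 : (1 : ENNReal) - 2⁻¹ = 2⁻¹ := by
        rw [ENNReal.one_sub_inv_two]
      rw [h3, inv_inv]
      rw [show (2 : ENNReal) = ENNReal.ofReal 2 by simp, ← ENNReal.ofReal_mul (by norm_num)]
      norm_num
    -- conclude positivity
    rw [pos_iff_ne_zero]
    intro hzero
    have hsub : Icc (0 : ℝ) 1 ⊆ (Icc (0 : ℝ) 1 \ ⋃ k, U k) ∪ ⋃ k, U k := by
      intro y hy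
      by_cases h : y ∈ ⋃ k, U k
      · exact Or.inr h
      · exact Or.inl ⟨hy, h⟩
    have hIcc : MeasureTheory.volume (Icc (0 : ℝ) 1) = 1 := by
      rw [Real.volume_Icc]
      norm_num
    have : (1 : ENNReal) ≤ ENNReal.ofReal (1 / 8) := by
      calc (1 : ENNReal) = MeasureTheory.volume (Icc (0 : ℝ) 1) := hIcc.symm
        _ ≤ MeasureTheory.volume ((Icc (0 : ℝ) 1 \ ⋃ k, U k) ∪ ⋃ k, U k) :=
            MeasureTheory.measure_mono hsub
        _ ≤ MeasureTheory.volume (Icc (0 : ℝ) 1 \ ⋃ k, U k) +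
              MeasureTheory.volume (⋃ k, U k) := MeasureTheory.measure_union_le _ _
        _ = MeasureTheory.volume (⋃ k, U k) := by rw [hzero, zero_add]
        _ ≤ ENNReal.ofReal (1 / 8) := hUtot
    have : (1 : ENNReal) ≤ ENNReal.ofReal (1 / 8) := this
    rw [show (1 : ENNReal) = ENNReal.ofReal 1 by simp] at this
    rw [ENNReal.ofReal_le_ofReal_iff (by norm_num)] at this
    norm_num at this
  · -- the avoidance property
    intro x t ht hsub
    set S : Set ℝ := Icc (0 : ℝ) 1 \ ⋃ k, U k with hSdef
    have hxS : x ∈ S := hsub ⟨0, h0E, by simp⟩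
    have hx1S : x + t ∈ S := hsub ⟨1, h1E, by simp⟩
    have hxI : x ∈ Icc (0 : ℝ) 1 := hxS.1
    have hx1I : x + t ∈ Icc (0 : ℝ) 1 := hx1S.1
    have ht1 : t ≤ 1 := by
      have := hxI.1; have := hx1I.2; linarith
    have htm1 : -1 ≤ t := by
      have := hxI.2; have := hx1I.1; linarith
    have htpos : 0 < |t| := abs_pos.mpr ht
    obtain ⟨k, hk⟩ := exists_pow_lt_of_lt_one htpos (by norm_num : (1 : ℝ) / 2 < 1)
    -- pigeonhole lemma
    have hLk := hLpos k
    have hgk := hgpos k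
    have hpigeon : ∀ a : ℝ, 0 ≤ a → a ≤ 1 → ∀ d : ℝ, 0 < d → d ≤ g k →
        L k ≤ (K k : ℝ) * d →
        ∃ j : ℕ, j ≤ K k ∧ ∃ s : ℤ, s ∈ Finset.Icc (-(NB k : ℤ)) (NB k : ℤ) ∧
          dist (a + (j : ℝ) * d) ((s : ℝ) * L k) ≤ g k := by
      intro a ha0 ha1 d hd hdg hspan
      set s : ℤ := ⌈a / L k⌉ with hsdef
      have hs0 : 0 ≤ s := Int.ceil_nonneg (by positivity)
      have hsN : s ≤ (NB k : ℤ) := by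
        rw [hsdef, Int.ceil_le]
        push_cast
        calc a / L k ≤ 2 / L k := by
              exact div_le_div_of_nonneg_right (by linarith) hLk.le
          _ ≤ ((NB k : ℕ) : ℝ) := by
              simp only [hNBdef]
              exact Nat.le_ceil _
      have hsl : a ≤ (s : ℝ) * L k := by
        have h1 : a / L k ≤ (s : ℝ) := Int.le_ceil _
        have h2 : a / L k * L k ≤ (s : ℝ) * L k := mul_le_mul_of_nonneg_right h1 hLk.le
        rwa [div_mul_cancel₀ _ (ne_of_gt hLk)] at h2
      have hsu : (s : ℝ) * L k ≤ a + L k := by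
        have h1 : (s : ℝ) < a / L k + 1 := Int.ceil_lt_add_one _
        have h2 : (s : ℝ) * L k ≤ (a / L k + 1) * L k :=
          mul_le_mul_of_nonneg_right h1.le hLk.le
        have h3 : (a / L k + 1) * L k = a + L k := by field_simp
        linarith
      set j : ℕ := ⌊((s : ℝ) * L k - a) / d⌋₊ with hjdef
      have hnum0 : 0 ≤ ((s : ℝ) * L k - a) / d := by
        apply div_nonneg (by linarith) hd.le
      have hjle : (j : ℝ) ≤ ((s : ℝ) * L k - a) / d := Nat.floor_le hnum0
      have hjK : j ≤ K k := by
        have h1 : ((s : ℝ) * L k - a) / d ≤ (K k : ℝ) := by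
          rw [div_le_iff₀ hd]
          have : (s : ℝ) * L k - a ≤ L k := by linarith
          linarith
        have h2 : (j : ℝ) ≤ (K k : ℝ) := le_trans hjle h1
        exact_mod_cast h2
      have hjd : (j : ℝ) * d ≤ (s : ℝ) * L k - a := by
        have := mul_le_mul_of_nonneg_right hjle hd.le
        rwa [div_mul_cancel₀ _ (ne_of_gt hd)] at this
      have hjd2 : (s : ℝ) * L k - a < ((j : ℝ) + 1) * d := by
        have h1 : ((s : ℝ) * L k - a) / d < (j : ℝ) + 1 := Nat.lt_floor_add_one _
        have h2 : ((s : ℝ) * L k - a) / d * d < ((j : ℝ) + 1) * d :=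
          mul_lt_mul_of_pos_right h1 hd
        rwa [div_mul_cancel₀ _ (ne_of_gt hd)] at h2
      refine ⟨j, hjK, s, Finset.mem_Icc.mpr ⟨by omega, hsN⟩, ?_⟩
      rw [Real.dist_eq, abs_of_nonpos (by linarith)]
      have : (s : ℝ) * L k - (a + (j : ℝ) * d) < d := by nlinarith
      linarith
    -- case split on sign of t
    rcases lt_or_gt_of_ne ht with htneg | htpos'
    · -- t < 0
      have hu : 0 < -t := by linarith
      have hu1 : -t ≤ 1 := by linarith
      have hklow : (1 / 2 : ℝ) ^ k ≤ -t := by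
        rw [abs_of_neg htneg] at hk
        linarith
      set a : ℝ := x + t * ((K k : ℝ) * g k) with hadef
      have haS : a ∈ S := hsub ⟨(K k : ℝ) * g k, hmem k (K k) le_rfl, rfl⟩
      have haI : a ∈ Icc (0 : ℝ) 1 := haS.1
      set d : ℝ := (-t) * g k with hddef
      have hd : 0 < d := by positivity
      have hdg : d ≤ g k := by
        rw [hddef]
        nlinarith [hgpos k]
      have hspan : L k ≤ (K k : ℝ) * d := by
        rw [hLdef, hddef]
        simp only
        have h1 : (K k : ℝ) * g k * (1 / 2) ^ k ≤ (K k : ℝ) * g k * (-t) := by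
          apply mul_le_mul_of_nonneg_left hklow (by positivity)
        linarith [h1]
      obtain ⟨j, hjK, s, hsmem, hdist⟩ := hpigeon a haI.1 haI.2 d hd hdg hspan
      set e : ℝ := ((K k - j : ℕ) : ℝ) * g k with hedef
      have heE : e ∈ E := hmem k (K k - j) (Nat.sub_le _ _)
      have hpeq : x + t * e = a + (j : ℝ) * d := by
        rw [hedef, hadef, hddef, Nat.cast_sub hjK]
        ring
      have hpS : x + t * e ∈ S := hsub ⟨e, heE, rfl⟩
      have hpU : x + t * e ∈ U k := by
        rw [hUdef]
        simp only
        refine mem_iUnion₂.mpr ⟨s, hsmem, ?_⟩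
        rw [Metric.mem_closedBall, hpeq]
        exact hdist
      exact hpS.2 (mem_iUnion.mpr ⟨k, hpU⟩)
    · -- t > 0
      have hklow : (1 / 2 : ℝ) ^ k ≤ t := by
        rw [abs_of_pos htpos'] at hk
        linarith
      set a : ℝ := x with hadef
      set d : ℝ := t * g k with hddef
      have hd : 0 < d := by positivity
      have hdg : d ≤ g k := by
        rw [hddef]
        nlinarith [hgpos k]
      have hspan : L k ≤ (K k : ℝ) * d := by
        rw [hLdef, hddef]
        simp only
        have h1 : (K k : ℝ) * g k * (1 / 2) ^ k ≤ (K k : ℝ) * g k * t := by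
          apply mul_le_mul_of_nonneg_left hklow (by positivity)
        linarith [h1]
      obtain ⟨j, hjK, s, hsmem, hdist⟩ := hpigeon a hxI.1 hxI.2 d hd hdg hspan
      set e : ℝ := (j : ℝ) * g k with hedef
      have heE : e ∈ E := hmem k j hjK
      have hpeq : x + t * e = a + (j : ℝ) * d := by
        rw [hedef, hadef, hddef]
        ring
      have hpS : x + t * e ∈ S := hsub ⟨e, heE, rfl⟩
      have hpU : x + t * e ∈ U k := by
        rw [hUdef]
        simp only
        refine mem_iUnion₂.mpr ⟨s, hsmem, ?_⟩
        rw [Metric.mem_closedBall, hpeq]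
        exact hdist
      exact hpS.2 (mem_iUnion.mpr ⟨k, hpU⟩)
end

section
/- There do not exist a point x_0 ∈ E and a sequence (a_n)_{n≥1} of pairwise distinct points of E such that a_n → x_0 and |a_{n+1} − x_0| / |a_n − x_0| → 1 as n → ∞. -/
/-!
Near a point `x₀ ∈ E` the set `E` has gaps at every scale: at level `i` every point of `E` lies
within `r i` of the grid `G i`, whose points are `1 / q i` apart, so the distances `|x - x₀|`,
`x ∈ E`, avoid the interval `(2 r i, 1 / q i - 2 r i)`, which contains `(2 r i, 4 r i)` once
`q i * r i ≤ 1 / 6`. A sequence of distances tending to `0` must jump over such a gap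
in one step, and at that step the ratio of consecutive distances is at most `1 / 2`.
-/

open Filter Set Metric Topology

theorem exists_le_and_succ_le_of_gap {d : ℕ → ℝ} {ε η : ℝ} {N : ℕ}
    (hgap : ∀ n, d n ≤ ε ∨ η ≤ d n) (hN : ε < d N) (hsmall : ∀ᶠ n in atTop, d n < η) :
    ∃ n ≥ N, η ≤ d n ∧ d (n + 1) ≤ ε := by
  by_contra! hjump
  have hlarge : ∀ n ≥ N, η ≤ d n := by
    refine Nat.le_induction ((hgap N).resolve_left hN.not_ge) fun n hn ih => ?_
    exact (hgap (n + 1)).resolve_left (hjump n hn ih).not_ge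
  obtain ⟨n, hn, hdn⟩ := ((eventually_ge_atTop N).and hsmall).exists
  exact (hlarge n hn).not_gt hdn

theorem not_tendsto_ratio_one_of_gaps {d : ℕ → ℝ} (hd_nonneg : ∀ n, 0 ≤ d n)
    (hd : Tendsto d atTop (𝓝 0))
    (hgap : ∀ t > 0, ∃ ε ∈ Ioo 0 t, ∀ n, d n ≤ ε ∨ 2 * ε ≤ d n) :
    ¬ Tendsto (fun n => d (n + 1) / d n) atTop (𝓝 1) := by
  intro hratio
  obtain ⟨N, hN⟩ := eventually_atTop.mp (hratio.eventually (eventually_gt_nhds one_half_lt_one))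
  have hdN : 0 < d N := by
    refine (hd_nonneg N).lt_of_ne fun h => ?_
    have hNN := hN N le_rfl
    rw [← h, div_zero] at hNN
    norm_num at hNN
  obtain ⟨ε, ⟨hε, hεN⟩, hgapε⟩ := hgap (d N) hdN
  obtain ⟨n, hn, hdn, hdn1⟩ :=
    exists_le_and_succ_le_of_gap hgapε hεN (hd.eventually (eventually_lt_nhds (by positivity)))
  have hhalf : d (n + 1) / d n ≤ 1 / 2 := by
    rw [div_le_iff₀ (by linarith)]
    linarith
  exact (hN n hn).not_ge hhalf

theorem dist_le_or_le_dist_of_near_separated {X : Type*} [PseudoMetricSpace X] {x y u v : X}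
    {r s : ℝ} (hxu : dist x u ≤ r) (hyv : dist y v ≤ r) (hsep : u ≠ v → s ≤ dist u v) :
    dist x y ≤ 2 * r ∨ s - 2 * r ≤ dist x y := by
  by_cases huv : u = v
  · subst huv
    left
    linarith [dist_triangle_right x y u]
  · right
    linarith [hsep huv, dist_triangle4 u x y v, dist_comm u x]

def gridPoints (q : ℕ) : Set ℝ := {x | ∃ k : ℤ, 0 ≤ k ∧ k ≤ (q : ℤ) ∧ x = (k : ℝ) / (q : ℝ)}

theorem gridPoints_finite (q : ℕ) : (gridPoints q).Finite := by
  refine ((finite_Icc (0 : ℤ) q).image fun k : ℤ => (k : ℝ) / q).subset ?_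
  rintro x ⟨k, hk0, hkq, rfl⟩
  exact ⟨k, ⟨hk0, hkq⟩, rfl⟩

theorem zero_mem_gridPoints (q : ℕ) : (0 : ℝ) ∈ gridPoints q :=
  ⟨0, le_rfl, by positivity, by simp⟩

theorem one_div_le_dist_of_mem_gridPoints {q : ℕ} {x y : ℝ} (hx : x ∈ gridPoints q)
    (hy : y ∈ gridPoints q) (hxy : x ≠ y) : 1 / q ≤ dist x y := by
  obtain ⟨k, -, -, rfl⟩ := hx
  obtain ⟨l, -, -, rfl⟩ := hy
  have hkl : (1 : ℝ) ≤ |(k : ℝ) - l| := by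
    exact_mod_cast Int.one_le_abs (sub_ne_zero.2 fun h => hxy (by rw [h]))
  rw [Real.dist_eq, ← sub_div, abs_div, Nat.abs_cast]
  exact div_le_div_of_nonneg_right hkl q.cast_nonneg

theorem abs_sub_le_or_le_of_infDist_gridPoints_le {q : ℕ} {r x y : ℝ}
    (hx : infDist x (gridPoints q) ≤ r) (hy : infDist y (gridPoints q) ≤ r) :
    |x - y| ≤ 2 * r ∨ 1 / q - 2 * r ≤ |x - y| := by
  have hcompact := (gridPoints_finite q).isCompact
  obtain ⟨u, hu, hxu⟩ := hcompact.exists_infDist_eq_dist ⟨0, zero_mem_gridPoints q⟩ x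
  obtain ⟨v, hv, hyv⟩ := hcompact.exists_infDist_eq_dist ⟨0, zero_mem_gridPoints q⟩ y
  simpa only [Real.dist_eq] using dist_le_or_le_dist_of_near_separated (hxu ▸ hx) (hyv ▸ hy)
    (one_div_le_dist_of_mem_gridPoints hu hv)

theorem tendsto_atTop_of_succ_eq_pow {M q : ℕ → ℕ} (hMpos : ∀ i, 0 < M i)
    (hMtop : Tendsto M atTop atTop) (hq0 : 2 ≤ q 0) (hqrec : ∀ i, q (i + 1) = q i ^ M i) :
    Tendsto q atTop atTop := by
  have hq2 : ∀ i, 2 ≤ q i := by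
    intro i
    induction i with
    | zero => exact hq0
    | succ i ih => rw [hqrec]; exact ih.trans (Nat.le_self_pow (hMpos i).ne' _)
  rw [← tendsto_add_atTop_iff_nat 1]
  refine tendsto_atTop_mono (fun i => ?_) hMtop
  calc M i ≤ 2 ^ M i := Nat.lt_two_pow_self.le
    _ ≤ q (i + 1) := hqrec i ▸ Nat.pow_le_pow_left (hq2 i) _

theorem tendsto_mul_rpow_neg_atTop {φ : ℝ → ℝ} (hφ : Tendsto φ atTop atTop) :
    Tendsto (fun x : ℝ => x * x ^ (-φ x)) atTop (𝓝 0) := by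
  refine squeeze_zero' ?_ ?_ tendsto_inv_atTop_zero
  · filter_upwards [eventually_ge_atTop 0] with x hx using by positivity
  · filter_upwards [hφ.eventually_ge_atTop 2, eventually_ge_atTop 1] with x hφx hx
    calc x * x ^ (-φ x) ≤ x * x ^ (-2 : ℝ) := by gcongr
      _ = x⁻¹ := by
          rw [Real.rpow_neg (by linarith), Real.rpow_two]
          field_simp

theorem falconer_no_slow_sequences_general
    (M : ℕ → ℕ) (hMpos : ∀ i, 0 < M i)
    (hMtop : Tendsto M atTop atTop)
    (q : ℕ → ℕ) (hq0 : q 0 = 2) (hqrec : ∀ i, q (i + 1) = q i ^ M i)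
    (φ : ℝ → ℝ)
    (hφtop : Tendsto φ atTop atTop)
    (G : ℕ → Set ℝ)
    (hG : ∀ i, G i = {x : ℝ | ∃ k : ℤ, 0 ≤ k ∧ k ≤ (q i : ℤ) ∧ x = (k : ℝ) / (q i : ℝ)})
    (r : ℕ → ℝ) (hr : ∀ i, r i = (q i : ℝ) ^ (-φ ((q i : ℕ) : ℝ)))
    (Ei : ℕ → Set ℝ)
    (hEi : ∀ i, Ei i = {x ∈ Set.Icc (0 : ℝ) 1 | Metric.infDist x (G i) ≤ r i})
    (E : Set ℝ) (hE : E = ⋂ i, Ei i) :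
    ¬ ∃ (x₀ : ℝ) (a : ℕ → ℝ), x₀ ∈ E ∧ (∀ n, a n ∈ E) ∧ Function.Injective a ∧
      Tendsto a atTop (nhds x₀) ∧
      Tendsto (fun n => |a (n + 1) - x₀| / |a n - x₀|) atTop (nhds 1) := by
  rintro ⟨x₀, a, hx₀, ha, -, hconv, hratio⟩
  have hq := tendsto_atTop_of_succ_eq_pow hMpos hMtop hq0.ge hqrec
  have hqr : Tendsto (fun i => (q i : ℝ) * r i) atTop (𝓝 0) := by
    simp only [hr]
    exact (tendsto_mul_rpow_neg_atTop hφtop).comp (tendsto_natCast_atTop_atTop.comp hq)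
  have hnear : ∀ i, ∀ x ∈ E, infDist x (gridPoints (q i)) ≤ r i := by
    intro i x hx
    rw [hE, mem_iInter] at hx
    have hxi := hx i
    rw [hEi, hG] at hxi
    exact hxi.2
  refine not_tendsto_ratio_one_of_gaps (fun n => abs_nonneg (a n - x₀)) ?_ ?_ hratio
  · simpa using (hconv.sub_const x₀).abs
  intro t ht
  obtain ⟨i, hqri, hqi⟩ := ((hqr.eventually (gt_mem_nhds (lt_min (by norm_num : (0 : ℝ) < 1 / 6)
    (half_pos ht)))).and (hq.eventually_ge_atTop 1)).exists
  have hqi : (1 : ℝ) ≤ q i := by exact_mod_cast hqi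
  have hri : 0 < r i := hr i ▸ Real.rpow_pos_of_pos (by linarith) _
  have h6 : 6 * r i ≤ 1 / q i := by
    rw [le_div_iff₀ (by linarith)]
    nlinarith [min_le_left (1 / 6 : ℝ) (t / 2)]
  refine ⟨2 * r i, ⟨by positivity, by nlinarith [min_le_right (1 / 6 : ℝ) (t / 2)]⟩, fun n => ?_⟩
  exact (abs_sub_le_or_le_of_infDist_gridPoints_le (hnear i _ (ha n)) (hnear i _ hx₀)).imp_right
    fun h => by linarith

/-- No slowly decreasing sequences near any point of `E`: there do not
exist `x₀ ∈ E` and a sequence of pairwise distinct points of `E` converging to `x₀`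
whose successive distances to `x₀` have ratio tending to `1`. -/
theorem falconer_no_slow_sequences
    (M : ℕ → ℕ) (hMpos : ∀ i, 0 < M i) (hMmono : Monotone M)
    (hMtop : Tendsto M atTop atTop)
    (q : ℕ → ℕ) (hq0 : q 0 = 2) (hqrec : ∀ i, q (i + 1) = q i ^ M i)
    (φ : ℝ → ℝ) (hφpos : ∀ t : ℝ, 2 ≤ t → 0 < φ t)
    (hφmono : MonotoneOn φ (Set.Ici (2 : ℝ)))
    (hφtop : Tendsto φ atTop atTop)
    (G : ℕ → Set ℝ)
    (hG : ∀ i, G i = {x : ℝ | ∃ k : ℤ, 0 ≤ k ∧ k ≤ (q i : ℤ) ∧ x = (k : ℝ) / (q i : ℝ)})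
    (r : ℕ → ℝ) (hr : ∀ i, r i = (q i : ℝ) ^ (-φ ((q i : ℕ) : ℝ)))
    (Ei : ℕ → Set ℝ)
    (hEi : ∀ i, Ei i = {x ∈ Set.Icc (0 : ℝ) 1 | Metric.infDist x (G i) ≤ r i})
    (E : Set ℝ) (hE : E = ⋂ i, Ei i) :
    ¬ ∃ (x₀ : ℝ) (a : ℕ → ℝ), x₀ ∈ E ∧ (∀ n, a n ∈ E) ∧ Function.Injective a ∧
      Tendsto a atTop (nhds x₀) ∧
      Tendsto (fun n => |a (n + 1) - x₀| / |a n - x₀|) atTop (nhds 1) :=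
  falconer_no_slow_sequences_general M hMpos hMtop q hq0 hqrec φ hφtop G hG r hr Ei hEi E hE
end

section
/- There exist an increasing sequence (M_n) of positive integers with M_n → ∞ and a monotone increasing function φ : [2, ∞) → (0, ∞) with φ(t) → ∞ such that φ(q_n) < M_n − 1 for every n, and such that the resulting set E satisfies: there exists C > 0 such that for all sufficiently small δ > 0, E can be covered by at most C·log(1/δ) intervals of length at most δ. In particular the logarithmic upper box dimension of E, limsup_{δ→0} log N_δ(E) / log(log(1/δ)), is at most 1. -/
open Filter Set Metric Pointwise

/-- The least number of sets of diameter at most `δ` needed to cover `A` (`N_δ(A)`). -/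
noncomputable def coverNum (A : Set ℝ) (δ : ℝ) : ℕ :=
  sInf {m : ℕ | ∃ U : Fin m → Set ℝ, A ⊆ ⋃ k, U k ∧ ∀ k, Metric.diam (U k) ≤ δ}

/-- Auxiliary: the sequence `q_i`. -/
def Qseq : ℕ → ℕ
  | 0 => 2
  | n + 1 => (Qseq n) ^ (Qseq n ^ 4 + 2)

lemma two_le_Qseq (n : ℕ) : 2 ≤ Qseq n := by
  induction n with
  | zero => exact le_refl _
  | succ n ih =>
    calc 2 ≤ Qseq n := ih
    _ ≤ Qseq n ^ (Qseq n ^ 4 + 2) := Nat.le_self_pow (by omega) _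

lemma Qseq_lt_succ (n : ℕ) : Qseq n < Qseq (n + 1) := by
  have h2 := two_le_Qseq n
  calc Qseq n = Qseq n ^ 1 := (pow_one _).symm
  _ < Qseq n ^ (Qseq n ^ 4 + 2) := Nat.pow_lt_pow_right (by omega) (by omega)

lemma Qseq_strictMono : StrictMono Qseq := strictMono_nat_of_lt_succ Qseq_lt_succ

lemma add_two_le_Qseq (n : ℕ) : n + 2 ≤ Qseq n := by
  induction n with
  | zero => simp [Qseq]
  | succ n ih => have := Qseq_lt_succ n; omega

/-- Auxiliary: index of the largest `Qseq` value `≤ m`. -/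
def gIdx (m : ℕ) : ℕ := Nat.findGreatest (fun n => Qseq n ≤ m) m

lemma gIdx_mono : Monotone gIdx := by
  intro a b hab
  exact Nat.findGreatest_mono (fun n h => h.trans hab) hab

lemma gIdx_Qseq (i : ℕ) : gIdx (Qseq i) = i := by
  rw [gIdx, Nat.findGreatest_eq_iff]
  refine ⟨by have := add_two_le_Qseq i; omega, fun _ => le_rfl, fun n hn _ => ?_⟩
  exact not_le.mpr (Qseq_strictMono hn)

/-- Auxiliary: the function `φ`. -/
noncomputable def phiFun (t : ℝ) : ℝ := ((Qseq (gIdx ⌊t⌋₊)) ^ 4 : ℕ)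

lemma phiFun_Qseq (i : ℕ) : phiFun ((Qseq i : ℕ) : ℝ) = ((Qseq i ^ 4 : ℕ) : ℝ) := by
  rw [phiFun, Nat.floor_natCast, gIdx_Qseq]

lemma phiFun_pos (t : ℝ) : 0 < phiFun t := by
  have := two_le_Qseq (gIdx ⌊t⌋₊)
  rw [phiFun]
  positivity

lemma phiFun_monotoneOn : MonotoneOn phiFun (Set.Ici (2 : ℝ)) := by
  intro s hs t ht hst
  rw [phiFun, phiFun]
  have h1 : gIdx ⌊s⌋₊ ≤ gIdx ⌊t⌋₊ := gIdx_mono (Nat.floor_mono hst)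
  have h2 : Qseq (gIdx ⌊s⌋₊) ≤ Qseq (gIdx ⌊t⌋₊) := Qseq_strictMono.monotone h1
  exact_mod_cast Nat.pow_le_pow_left h2 4

lemma phiFun_tendsto : Tendsto phiFun atTop atTop := by
  rw [Filter.tendsto_atTop]
  intro b
  obtain ⟨n, hn⟩ := exists_nat_ge b
  filter_upwards [eventually_ge_atTop ((Qseq n : ℕ) : ℝ)] with t ht
  have hfl : Qseq n ≤ ⌊t⌋₊ := Nat.le_floor ht
  have hg : n ≤ gIdx ⌊t⌋₊ :=
    Nat.le_findGreatest (le_trans (by have := add_two_le_Qseq n; omega) hfl) hfl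
  have h1 : Qseq n ≤ Qseq (gIdx ⌊t⌋₊) ^ 4 :=
    le_trans (Qseq_strictMono.monotone hg) (Nat.le_self_pow (by omega) _)
  have h2 : n ≤ Qseq n := by have := add_two_le_Qseq n; omega
  calc b ≤ (n : ℝ) := hn
  _ ≤ ((Qseq (gIdx ⌊t⌋₊) ^ 4 : ℕ) : ℝ) := by exact_mod_cast h2.trans h1
  _ = phiFun t := rfl

/-- Extraction of a nearby grid point from an `infDist` bound. -/
lemma exists_close_grid (Nn : ℕ) (x ρ : ℝ)
    (h : Metric.infDist x {y : ℝ | ∃ k : ℤ, 0 ≤ k ∧ k ≤ (Nn : ℤ) ∧ y = (k : ℝ) / (Nn : ℝ)} ≤ ρ) :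
    ∃ k : ℤ, 0 ≤ k ∧ k ≤ (Nn : ℤ) ∧ |x - (k : ℝ) / (Nn : ℝ)| ≤ ρ := by
  set S : Set ℝ := {y : ℝ | ∃ k : ℤ, 0 ≤ k ∧ k ≤ (Nn : ℤ) ∧ y = (k : ℝ) / (Nn : ℝ)} with hS
  have hSim : S = (fun k : ℤ => (k : ℝ) / (Nn : ℝ)) '' (Set.Icc (0 : ℤ) (Nn : ℤ)) := by
    ext y
    simp only [hS, mem_setOf_eq, mem_image, mem_Icc]
    constructor
    · rintro ⟨k, h1, h2, h3⟩; exact ⟨k, ⟨h1, h2⟩, h3.symm⟩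
    · rintro ⟨k, ⟨h1, h2⟩, h3⟩; exact ⟨k, h1, h2, h3.symm⟩
  have hfin : S.Finite := by rw [hSim]; exact (Set.finite_Icc _ _).image _
  have hne : S.Nonempty := ⟨0, 0, le_rfl, by exact_mod_cast Nn.zero_le, by simp⟩
  obtain ⟨y, hyS, hy⟩ := hfin.isCompact.exists_infDist_eq_dist hne x
  obtain ⟨k, h1, h2, h3⟩ := hyS
  exact ⟨k, h1, h2, by rw [← Real.dist_eq, ← h3]; exact hy ▸ h⟩

set_option maxHeartbeats 2000000 in
/-- There exist an increasing sequence `(M n)` of positive integers tending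
to infinity and a monotone increasing `φ : [2,∞) → (0,∞)` tending to infinity with
`φ(q n) < M n - 1` for every `n`, such that the resulting set `E` can be covered by at most
`C log(1/δ)` intervals of length `≤ δ` for all small `δ > 0`; in particular the logarithmic
upper box dimension of `E` is at most `1`. -/
theorem falconer_explicit_small_log_dim :
    ∃ (M : ℕ → ℕ) (φ : ℝ → ℝ),
      (∀ i, 0 < M i) ∧ Monotone M ∧ Tendsto M atTop atTop ∧
      (∀ t : ℝ, 2 ≤ t → 0 < φ t) ∧ MonotoneOn φ (Set.Ici (2 : ℝ)) ∧
      Tendsto φ atTop atTop ∧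
      ∀ (q : ℕ → ℕ), q 0 = 2 → (∀ i, q (i + 1) = q i ^ M i) →
      ∀ (G : ℕ → Set ℝ),
        (∀ i, G i = {x : ℝ | ∃ k : ℤ, 0 ≤ k ∧ k ≤ (q i : ℤ) ∧ x = (k : ℝ) / (q i : ℝ)}) →
      ∀ (r : ℕ → ℝ), (∀ i, r i = (q i : ℝ) ^ (-φ ((q i : ℕ) : ℝ))) →
      ∀ (Ei : ℕ → Set ℝ),
        (∀ i, Ei i = {x ∈ Set.Icc (0 : ℝ) 1 | Metric.infDist x (G i) ≤ r i}) →
      ∀ (E : Set ℝ), E = ⋂ i, Ei i →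
        (∀ i, φ ((q i : ℕ) : ℝ) < (M i : ℝ) - 1) ∧
        (∃ C : ℝ, 0 < C ∧ ∀ᶠ δ in nhdsWithin (0 : ℝ) (Set.Ioi 0),
          ∃ m : ℕ, (m : ℝ) ≤ C * Real.log (1 / δ) ∧
            ∃ c d : ℕ → ℝ, E ⊆ ⋃ k ∈ Finset.range m, Set.Icc (c k) (d k) ∧
              ∀ k < m, d k - c k ≤ δ) ∧
        Filter.limsup (fun δ : ℝ => Real.log (coverNum E δ) / Real.log (Real.log (1 / δ)))
          (nhdsWithin (0 : ℝ) (Set.Ioi 0)) ≤ 1 := by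
  classical
  refine ⟨fun n => Qseq n ^ 4 + 2, phiFun, fun i => by positivity, ?_, ?_,
    fun t _ => phiFun_pos t, phiFun_monotoneOn, phiFun_tendsto, ?_⟩
  · -- Monotone M
    intro a b hab
    have h1 := Qseq_strictMono.monotone hab
    have h2 := Nat.pow_le_pow_left h1 4
    show Qseq a ^ 4 + 2 ≤ Qseq b ^ 4 + 2
    omega
  · -- Tendsto M
    apply tendsto_atTop_mono (fun n => ?_) tendsto_id
    have h1 := add_two_le_Qseq n
    have h2 : Qseq n ≤ Qseq n ^ 4 := Nat.le_self_pow (by omega) _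
    show n ≤ Qseq n ^ 4 + 2
    omega
  intro q hq0 hqs G hG r hr Ei hEi E hE
  have hqQ : ∀ i, q i = Qseq i := by
    intro i
    induction i with
    | zero => exact hq0
    | succ n ih => rw [hqs n, ih]; rfl
  have hr' : ∀ i, r i = ((Qseq i ^ (Qseq i ^ 4) : ℕ) : ℝ)⁻¹ := by
    intro i
    have h2 : (2 : ℕ) ≤ Qseq i := two_le_Qseq i
    rw [hr i, hqQ i, phiFun_Qseq i]
    rw [Real.rpow_neg (by positivity), Real.rpow_natCast]
    push_cast
    ring
  have hrpos : ∀ i, 0 < r i := by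
    intro i
    rw [hr' i]
    have := two_le_Qseq i
    positivity
  have hRmono : ∀ i, Qseq i ^ (Qseq i ^ 4) < Qseq (i + 1) ^ (Qseq (i + 1) ^ 4) := by
    intro i
    have h1 := Qseq_lt_succ i
    have h2 := two_le_Qseq i
    calc Qseq i ^ (Qseq i ^ 4) < Qseq (i + 1) ^ (Qseq i ^ 4) :=
          Nat.pow_lt_pow_left h1 (by positivity)
    _ ≤ Qseq (i + 1) ^ (Qseq (i + 1) ^ 4) :=
          Nat.pow_le_pow_right (by omega) (Nat.pow_le_pow_left h1.le 4)
  have hrlt : ∀ i, r (i + 1) < r i := by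
    intro i
    rw [hr' i, hr' (i + 1)]
    have h2 := two_le_Qseq i
    apply inv_strictAnti₀ (by positivity)
    exact_mod_cast hRmono i
  -- the key covering statement
  have key : ∀ δ : ℝ, 0 < δ → δ < 2 * r 1 →
      ∃ m : ℕ, (m : ℝ) ≤ Real.log (1 / δ) ∧
        ∃ c d : ℕ → ℝ, E ⊆ ⋃ k ∈ Finset.range m, Set.Icc (c k) (d k) ∧
          ∀ k < m, c k ≤ d k ∧ d k - c k ≤ δ := by
    intro δ hδ hδ1
    have hex : ∃ j, 2 * r (j + 1) ≤ δ := by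
      obtain ⟨n, hn⟩ := exists_nat_ge (2 / δ)
      refine ⟨n, ?_⟩
      have hq1 : Qseq (n + 1) ≤ Qseq (n + 1) ^ (Qseq (n + 1) ^ 4) :=
        Nat.le_self_pow (pow_ne_zero 4 (by have := two_le_Qseq (n + 1); omega)) _
      have h1 : (n : ℝ) + 3 ≤ ((Qseq (n + 1) ^ (Qseq (n + 1) ^ 4) : ℕ) : ℝ) := by
        have := add_two_le_Qseq (n + 1)
        exact_mod_cast by omega
      have hpos : (0 : ℝ) < (n : ℝ) + 3 := by positivity
      have hrn : r (n + 1) ≤ ((n : ℝ) + 3)⁻¹ := by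
        rw [hr' (n + 1)]
        exact inv_anti₀ hpos h1
      have h2 : 2 ≤ (n : ℝ) * δ := by
        have := (div_le_iff₀ hδ).mp hn
        linarith
      have h3 : 2 * ((n : ℝ) + 3)⁻¹ ≤ δ := by
        rw [← div_eq_mul_inv, div_le_iff₀ hpos]
        nlinarith
      nlinarith [hrn]
    set i := Nat.find hex with hidef
    have hfind : 2 * r (i + 1) ≤ δ := Nat.find_spec hex
    have hi1 : 1 ≤ i := by
      by_contra h
      have h0 : i = 0 := by omega
      rw [h0] at hfind
      linarith
    have hmin : δ < 2 * r i := by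
      have h := Nat.find_min hex (show i - 1 < i by omega)
      have hi : i - 1 + 1 = i := by omega
      rw [hi] at h
      exact not_le.mp h
    clear_value i
    set Q := Qseq i with hQdef
    have hQ2 : 2 ≤ Q := two_le_Qseq i
    have hQ9 : (262144 : ℕ) ≤ Q := by
      have h1 : Qseq 1 = 262144 := by norm_num [Qseq]
      calc (262144 : ℕ) = Qseq 1 := h1.symm
      _ ≤ Qseq i := Qseq_strictMono.monotone hi1
    have hQr : (262144 : ℝ) ≤ (Q : ℝ) := by exact_mod_cast hQ9
    have hri : r i = ((Q ^ Q ^ 4 : ℕ) : ℝ)⁻¹ := hr' i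
    have hRpos : (0 : ℝ) < ((Q ^ Q ^ 4 : ℕ) : ℝ) := by positivity
    -- logarithmic lower bound on log(1/δ)
    have hlog_ge : ((Q : ℝ) ^ 4) * Real.log Q - Real.log 2 ≤ Real.log (1 / δ) := by
      have h1 : 1 / (2 * r i) ≤ 1 / δ := one_div_le_one_div_of_le hδ hmin.le
      have h2 : 1 / (2 * r i) = ((Q ^ Q ^ 4 : ℕ) : ℝ) / 2 := by
        rw [hri]
        field_simp
      have h3 : Real.log (((Q ^ Q ^ 4 : ℕ) : ℝ) / 2) = ((Q : ℝ) ^ 4) * Real.log Q - Real.log 2 := by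
        rw [Real.log_div (ne_of_gt hRpos) two_ne_zero]
        congr 1
        have hc : ((Q ^ Q ^ 4 : ℕ) : ℝ) = ((Q : ℕ) : ℝ) ^ (Q ^ 4 : ℕ) := by push_cast; ring
        rw [hc, Real.log_pow]
        push_cast
        ring
      calc ((Q : ℝ) ^ 4) * Real.log Q - Real.log 2
          = Real.log (1 / (2 * r i)) := by rw [h2, h3]
      _ ≤ Real.log (1 / δ) := Real.log_le_log (by have := hrpos i; positivity) h1
    have hlogQ : (1 : ℝ) ≤ Real.log Q := by
      rw [Real.le_log_iff_exp_le (by positivity)]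
      calc Real.exp 1 ≤ 2.7182818286 := Real.exp_one_lt_d9.le
      _ ≤ (262144 : ℝ) := by norm_num
      _ ≤ (Q : ℝ) := hQr
    have hlog2 : Real.log 2 ≤ 1 := by
      have := Real.log_two_lt_d9
      linarith
    set A : ℕ := Q ^ 2 with hA
    set L : ℕ := 4 * A + 1 with hL
    set m : ℕ := (Q + 1) * L with hm
    have hmle : (m : ℝ) ≤ Real.log (1 / δ) := by
      have hq0' : (0 : ℝ) ≤ (Q : ℝ) := by positivity
      have e1 : (262144 : ℝ) * (Q : ℝ) ^ 3 ≤ (Q : ℝ) * (Q : ℝ) ^ 3 :=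
        mul_le_mul_of_nonneg_right hQr (by positivity)
      have e2 : (262144 : ℝ) * (Q : ℝ) ^ 2 ≤ (Q : ℝ) * (Q : ℝ) ^ 2 :=
        mul_le_mul_of_nonneg_right hQr (by positivity)
      have e3 : (262144 : ℝ) * (Q : ℝ) ≤ (Q : ℝ) * (Q : ℝ) :=
        mul_le_mul_of_nonneg_right hQr (by positivity)
      have h1 : ((Q : ℝ) + 1) * (4 * (Q : ℝ) ^ 2 + 1) + 1 ≤ (Q : ℝ) ^ 4 := by nlinarith
      have h4 : (Q : ℝ) ^ 4 ≤ (Q : ℝ) ^ 4 * Real.log Q := by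
        nlinarith [pow_nonneg hq0' 4]
      calc (m : ℝ) = ((Q : ℝ) + 1) * (4 * (Q : ℝ) ^ 2 + 1) := by
            rw [hm, hL, hA]; push_cast; ring
      _ ≤ (Q : ℝ) ^ 4 - 1 := by linarith
      _ ≤ (Q : ℝ) ^ 4 * Real.log Q - Real.log 2 := by linarith
      _ ≤ Real.log (1 / δ) := hlog_ge
    -- the grid step relation
    set N : ℕ := Q ^ (Q ^ 4 + 1) with hN
    have hQN : Qseq (i + 1) = Q * N := by
      show Qseq i ^ (Qseq i ^ 4 + 2) = Q * N
      rw [← hQdef, hN]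
      ring
    set qq : ℝ := ((Qseq (i + 1) : ℕ) : ℝ) with hqq
    have hqqpos : (0 : ℝ) < qq := by
      have := two_le_Qseq (i + 1)
      rw [hqq]
      positivity
    have hriq : r i * qq = (Q : ℝ) ^ 2 := by
      rw [hri, hqq, hQN, hN]
      push_cast
      rw [← pow_succ']
      have hQne : (Q : ℝ) ≠ 0 := by positivity
      rw [show Q ^ 4 + 1 + 1 = Q ^ 4 + 2 from rfl, pow_add]
      field_simp
    -- define the cover
    refine ⟨m, hmle,
      fun k => ((k / L : ℕ) : ℝ) / (Q : ℝ) + (((k % L : ℕ) : ℝ) - 2 * (Q : ℝ) ^ 2) / qq - r (i + 1),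
      fun k => ((k / L : ℕ) : ℝ) / (Q : ℝ) + (((k % L : ℕ) : ℝ) - 2 * (Q : ℝ) ^ 2) / qq + r (i + 1),
      ?_, ?_⟩
    · -- coverage
      intro x hx
      have hxmem : ∀ n, x ∈ Ei n := fun n => mem_iInter.mp (hE ▸ hx) n
      have hxi : Metric.infDist x (G i) ≤ r i := by
        have h := hxmem i
        rw [hEi i] at h
        exact h.2
      have hxi1 : Metric.infDist x (G (i + 1)) ≤ r (i + 1) := by
        have h := hxmem (i + 1)
        rw [hEi (i + 1)] at h
        exact h.2
      rw [hG i, hqQ i, ← hQdef] at hxi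
      obtain ⟨p, hp0, hpQ, hpx⟩ := exists_close_grid Q x (r i) hxi
      rw [hG (i + 1), hqQ (i + 1)] at hxi1
      obtain ⟨p', hp'0, hp'Q, hp'x⟩ := exists_close_grid (Qseq (i + 1)) x (r (i + 1)) hxi1
      set j : ℤ := p' - p * N with hj
      have hQRne : (Q : ℝ) ≠ 0 := by positivity
      have hNpos : 0 < N := by rw [hN]; positivity
      have hNRne : (N : ℝ) ≠ 0 := by positivity
      have hq1 : qq = (Q : ℝ) * (N : ℝ) := by rw [hqq, hQN]; push_cast; ring
      have hjq : (j : ℝ) / qq = (p' : ℝ) / qq - (p : ℝ) / (Q : ℝ) := by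
        rw [hj, hq1]
        push_cast
        field_simp
      have hjb : |(j : ℝ)| ≤ 2 * (Q : ℝ) ^ 2 := by
        have h1 : |(j : ℝ) / qq| ≤ r (i + 1) + r i := by
          rw [hjq]
          calc |(p' : ℝ) / qq - (p : ℝ) / (Q : ℝ)|
              = |((p' : ℝ) / qq - x) + (x - (p : ℝ) / (Q : ℝ))| := by ring_nf
          _ ≤ |(p' : ℝ) / qq - x| + |x - (p : ℝ) / (Q : ℝ)| := abs_add_le _ _
          _ ≤ r (i + 1) + r i := by
                rw [abs_sub_comm]
                exact add_le_add hp'x hpx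
        have h2 : |(j : ℝ)| ≤ (r (i + 1) + r i) * qq := by
          rw [abs_div, abs_of_pos hqqpos] at h1
          exact (div_le_iff₀ hqqpos).mp h1
        have h3 : (r (i + 1) + r i) * qq ≤ (2 * r i) * qq := by
          nlinarith [hrlt i]
        calc |(j : ℝ)| ≤ (2 * r i) * qq := h2.trans h3
        _ = 2 * (r i * qq) := by ring
        _ = 2 * (Q : ℝ) ^ 2 := by rw [hriq]
      have hjZ : |j| ≤ 2 * (A : ℤ) := by
        have h2A : ((2 * (A : ℤ) : ℤ) : ℝ) = 2 * (Q : ℝ) ^ 2 := by rw [hA]; push_cast; ring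
        have hjb' : |(j : ℝ)| ≤ ((2 * (A : ℤ) : ℤ) : ℝ) := by rw [h2A]; exact hjb
        exact_mod_cast hjb'
      have hjZ' := abs_le.mp hjZ
      set l : ℕ := (j + 2 * (A : ℤ)).toNat with hl'
      have hlle : l ≤ 4 * A := by
        rw [hl']
        rw [Int.toNat_le]
        push_cast
        omega
      have hlcast : (l : ℝ) = (j : ℝ) + 2 * (Q : ℝ) ^ 2 := by
        have h0 : (0 : ℤ) ≤ j + 2 * (A : ℤ) := by omega
        have : ((l : ℕ) : ℤ) = j + 2 * (A : ℤ) := by rw [hl', Int.toNat_of_nonneg h0]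
        have := congrArg (fun z : ℤ => (z : ℝ)) this
        push_cast at this
        rw [this, hA]
        push_cast
        ring
      set k : ℕ := l + p.toNat * L with hk'
      have hpt : p.toNat ≤ Q := Int.toNat_le.mpr hpQ
      have hkm : k < m := by
        have h1 : k ≤ 4 * A + Q * L := by
          rw [hk']
          exact add_le_add hlle (Nat.mul_le_mul_right L hpt)
        have h3 : 4 * A + Q * L < L + Q * L := Nat.add_lt_add_right (by omega) _
        have h4 : L + Q * L = (Q + 1) * L := by ring
        rw [hm]
        omega
      have hdiv : k / L = p.toNat := by
        rw [hk', Nat.add_mul_div_right _ _ (show 0 < L by omega),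
          Nat.div_eq_of_lt (show l < L by omega)]
        omega
      have hmod : k % L = l := by
        rw [hk', Nat.add_mul_mod_self_right, Nat.mod_eq_of_lt (show l < L by omega)]
      refine mem_biUnion (Finset.mem_range.mpr hkm) ?_
      have hptc : ((p.toNat : ℕ) : ℝ) = (p : ℝ) := by
        have := Int.toNat_of_nonneg hp0
        exact_mod_cast congrArg (fun z : ℤ => (z : ℝ)) this
      have hcenter : ((k / L : ℕ) : ℝ) / (Q : ℝ) + (((k % L : ℕ) : ℝ) - 2 * (Q : ℝ) ^ 2) / qq
          = (p' : ℝ) / qq := by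
        rw [hdiv, hmod, hptc, hlcast]
        have : ((j : ℝ) + 2 * (Q : ℝ) ^ 2 - 2 * (Q : ℝ) ^ 2) / qq = (j : ℝ) / qq := by ring
        rw [this, hjq]
        ring
      have habs := abs_le.mp hp'x
      simp only [Set.mem_Icc]
      rw [hcenter]
      constructor
      · linarith [habs.2]
      · linarith [habs.1]
    · -- lengths
      intro k _
      constructor
      · have := hrpos (i + 1); linarith
      · have : ∀ a : ℝ, a + r (i + 1) - (a - r (i + 1)) = 2 * r (i + 1) := fun a => by ring
        rw [this]
        exact hfind
  -- assemble the three conclusions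
  have hrpos1 : 0 < 2 * r 1 := by linarith [hrpos 1]
  have hmem : Set.Ioo (0 : ℝ) (min (2 * r 1) (1 / 16)) ∈ nhdsWithin (0 : ℝ) (Set.Ioi 0) :=
    Ioo_mem_nhdsGT_of_mem ⟨le_refl 0, lt_min hrpos1 (by norm_num)⟩
  refine ⟨?_, ⟨1, one_pos, ?_⟩, ?_⟩
  · -- φ(q i) < M i - 1
    intro i
    rw [hqQ i, phiFun_Qseq i]
    push_cast
    linarith
  · -- the covering statement
    filter_upwards [hmem] with δ hδ
    obtain ⟨m, h1, c, d, h2, h3⟩ :=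
      key δ hδ.1 (lt_of_lt_of_le hδ.2 (min_le_left _ _))
    exact ⟨m, by rw [one_mul]; exact h1, c, d, h2, fun k hk => (h3 k hk).2⟩
  · -- the limsup bound
    have hev : ∀ᶠ δ in nhdsWithin (0 : ℝ) (Set.Ioi 0),
        Real.log (coverNum E δ) / Real.log (Real.log (1 / δ)) ≤ 1 := by
      filter_upwards [hmem] with δ hδ
      obtain ⟨m, h1, c, d, h2, h3⟩ :=
        key δ hδ.1 (lt_of_lt_of_le hδ.2 (min_le_left _ _))
      have hδ16 : δ < 1 / 16 := lt_of_lt_of_le hδ.2 (min_le_right _ _)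
      have hlogδ : Real.exp 1 ≤ Real.log (1 / δ) := by
        have h16 : (16 : ℝ) ≤ 1 / δ := by
          rw [le_div_iff₀ hδ.1]
          linarith
        have h4 : Real.log 16 = 4 * Real.log 2 := by
          rw [show (16 : ℝ) = 2 ^ 4 by norm_num, Real.log_pow]
          push_cast
          ring
        calc Real.exp 1 ≤ 2.7182818286 := Real.exp_one_lt_d9.le
        _ ≤ Real.log 16 := by nlinarith [Real.log_two_gt_d9]
        _ ≤ Real.log (1 / δ) := Real.log_le_log (by norm_num) h16
      have hD1 : 1 ≤ Real.log (Real.log (1 / δ)) := by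
        calc (1 : ℝ) = Real.log (Real.exp 1) := (Real.log_exp 1).symm
        _ ≤ Real.log (Real.log (1 / δ)) := Real.log_le_log (Real.exp_pos 1) hlogδ
      have hcov : (coverNum E δ : ℝ) ≤ Real.log (1 / δ) := by
        have hmem' : m ∈ {m : ℕ | ∃ U : Fin m → Set ℝ,
            E ⊆ ⋃ k, U k ∧ ∀ k, Metric.diam (U k) ≤ δ} := by
          refine ⟨fun k => Set.Icc (c k.1) (d k.1), ?_, ?_⟩
          · intro x hx
            obtain ⟨k, hk1, hk2⟩ := mem_iUnion₂.mp (h2 hx)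
            exact mem_iUnion.mpr ⟨⟨k, Finset.mem_range.mp hk1⟩, hk2⟩
          · intro k
            obtain ⟨hcd, hlen⟩ := h3 k.1 k.2
            rw [Real.diam_Icc hcd]
            exact hlen
        have := Nat.sInf_le hmem'
        calc (coverNum E δ : ℝ) ≤ (m : ℝ) := by exact_mod_cast this
        _ ≤ Real.log (1 / δ) := h1
      have hnum : Real.log (coverNum E δ) ≤ Real.log (Real.log (1 / δ)) := by
        rcases Nat.eq_zero_or_pos (coverNum E δ) with h | h
        · rw [h]
          push_cast
          rw [Real.log_zero]
          linarith
        · exact Real.log_le_log (by exact_mod_cast h) hcov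
      rw [div_le_one (by linarith)]
      linarith
    have hev0 : ∀ᶠ δ in nhdsWithin (0 : ℝ) (Set.Ioi 0),
        (0 : ℝ) ≤ Real.log (coverNum E δ) / Real.log (Real.log (1 / δ)) := by
      filter_upwards [hmem] with δ hδ
      have hδ16 : δ < 1 / 16 := lt_of_lt_of_le hδ.2 (min_le_right _ _)
      have hlogδ : Real.exp 1 ≤ Real.log (1 / δ) := by
        have h16 : (16 : ℝ) ≤ 1 / δ := by
          rw [le_div_iff₀ hδ.1]
          linarith
        have h4 : Real.log 16 = 4 * Real.log 2 := by
          rw [show (16 : ℝ) = 2 ^ 4 by norm_num, Real.log_pow]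
          push_cast
          ring
        calc Real.exp 1 ≤ 2.7182818286 := Real.exp_one_lt_d9.le
        _ ≤ Real.log 16 := by nlinarith [Real.log_two_gt_d9]
        _ ≤ Real.log (1 / δ) := Real.log_le_log (by norm_num) h16
      have hD1 : 1 ≤ Real.log (Real.log (1 / δ)) := by
        calc (1 : ℝ) = Real.log (Real.exp 1) := (Real.log_exp 1).symm
        _ ≤ Real.log (Real.log (1 / δ)) := Real.log_le_log (Real.exp_pos 1) hlogδ
      have hnum0 : 0 ≤ Real.log (coverNum E δ) := by
        rcases Nat.eq_zero_or_pos (coverNum E δ) with h | h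
        · rw [h]; push_cast; rw [Real.log_zero]
        · exact Real.log_natCast_nonneg _
      exact div_nonneg hnum0 (by linarith)
    exact Filter.limsup_le_of_le
      ((Filter.isBoundedUnder_of_eventually_ge hev0).isCoboundedUnder_le) hev
end

section
/- Let (a_n)_{n≥1} be positive real numbers with a_n > Σ_{m>n} a_m for every n ≥ 1, set τ_n := Σ_{m>n} a_m, and assume 2^n·(log(1/τ_n))^(−s) → 0 as n → ∞ for every s > 0. Let K := {Σ_{n=1}^∞ ε_n·a_n : ε_n ∈ {0,1} for all n}. Then for every s > 0 the generalized Hausdorff measure H^{h_s}(K) with gauge h_s(r) = (log(1/r))^(−s) equals 0; that is, K has logarithmic Hausdorff dimension 0. -/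
open Filter Set Metric Pointwise

/-- The gauge `h_s(r) = (log(1/r))^(-s)` as a function `ℝ≥0∞ → ℝ≥0∞`, used to build
the generalized (logarithmic) Hausdorff measure via Carathéodory's metric construction. -/
noncomputable def hGauge (s : ℝ) : ENNReal → ENNReal :=
  fun r => ENNReal.ofReal ((Real.log (1 / r.toReal)) ^ (-s))

/-!
At level `n` the set `K` is covered by the `2 ^ n` intervals `[c, c + τ]`, where `c` runs over
the partial sums `Σ_{i<n} ε_i a_i` and `τ = Σ_{m ≥ n} a_m` bounds every possible tail.
Their total `h_s`-mass `2 ^ n (log (1/τ))^(-s)` tends to `0` by hypothesis, so Carathéodory's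
construction gives `H^{h_s}(K) = 0`.
-/

open scoped ENNReal Topology
open MeasureTheory

theorem MeasureTheory.Measure.mkMetric_eq_zero_of_tendsto_sum {X β : Type*} [EMetricSpace X]
    [MeasurableSpace X] [BorelSpace X]
    {ι : β → Type*} [∀ n, Fintype (ι n)] {l : Filter β} [l.NeBot] {s : Set X}
    (r : β → ℝ≥0∞) (hr : Tendsto r l (𝓝 0)) (t : ∀ n, ι n → Set X)
    (ht : ∀ᶠ n in l, ∀ i, ediam (t n i) ≤ r n) (hst : ∀ᶠ n in l, s ⊆ ⋃ i, t n i)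
    {m : ℝ≥0∞ → ℝ≥0∞} (hm : Tendsto (fun n => ∑ i, m (ediam (t n i))) l (𝓝 0)) :
    Measure.mkMetric m s = 0 :=
  le_antisymm ((Measure.mkMetric_le_liminf_sum s r hr t ht hst m).trans_eq hm.liminf_eq) bot_le

def cantorSumSet (a : ℕ → ℝ) : Set ℝ :=
  {x | ∃ ε : ℕ → Bool, x = ∑' n, if ε n then a n else 0}

def cantorCylinder (a : ℕ → ℝ) (n : ℕ) (ε : Fin n → Bool) : Set ℝ :=
  Icc (∑ i, if ε i then a i else 0) ((∑ i, if ε i then a i else 0) + ∑' m, a (m + n))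

section

variable {a : ℕ → ℝ}

theorem ediam_cantorCylinder (n : ℕ) (ε : Fin n → Bool) :
    ediam (cantorCylinder a n ε) = ENNReal.ofReal (∑' m, a (m + n)) := by
  rw [cantorCylinder, Real.ediam_Icc, add_sub_cancel_left]

theorem tsum_ite_mem_cantorCylinder (ha0 : ∀ n, 0 ≤ a n) (ha : Summable a) (ε : ℕ → Bool)
    (n : ℕ) :
    (∑' i, if ε i then a i else 0) ∈ cantorCylinder a n (fun i => ε i) := by
  set g : ℕ → ℝ := fun i => if ε i then a i else 0
  have hg0 : ∀ i, 0 ≤ g i := fun i => by by_cases h : ε i <;> simp [g, h, ha0 i]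
  have hga : ∀ i, g i ≤ a i := fun i => by by_cases h : ε i <;> simp [g, h, ha0 i]
  have hg : Summable g := ha.of_nonneg_of_le hg0 hga
  have hsplit : ∑' i, g i = ∑ i : Fin n, g i + ∑' m, g (m + n) := by
    rw [Fin.sum_univ_eq_sum_range g, hg.sum_add_tsum_nat_add n]
  have htail_nonneg : 0 ≤ ∑' m, g (m + n) := tsum_nonneg fun m => hg0 _
  have htail_le : ∑' m, g (m + n) ≤ ∑' m, a (m + n) :=
    ((summable_nat_add_iff n).2 hg).tsum_le_tsum (fun m => hga _) ((summable_nat_add_iff n).2 ha)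
  change ∑' i, g i ∈ Icc (∑ i : Fin n, g i) (∑ i : Fin n, g i + ∑' m, a (m + n))
  rw [hsplit]
  exact ⟨le_add_of_nonneg_right htail_nonneg, add_le_add_right htail_le _⟩

theorem cantorSumSet_subset_iUnion_cantorCylinder (ha0 : ∀ n, 0 ≤ a n) (ha : Summable a)
    (n : ℕ) :
    cantorSumSet a ⊆ ⋃ ε : Fin n → Bool, cantorCylinder a n ε := by
  rintro x ⟨ε, rfl⟩
  exact mem_iUnion.2 ⟨_, tsum_ite_mem_cantorCylinder ha0 ha ε n⟩

theorem sum_hGauge_ediam_cantorCylinder (ha0 : ∀ n, 0 ≤ a n) (s : ℝ) (n : ℕ) :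
    ∑ ε : Fin n → Bool, hGauge s (ediam (cantorCylinder a n ε)) =
      ENNReal.ofReal (2 ^ n * Real.log (1 / ∑' m, a (m + n)) ^ (-s)) := by
  have htail : 0 ≤ ∑' m, a (m + n) := tsum_nonneg fun m => ha0 _
  simp only [ediam_cantorCylinder, hGauge, ENNReal.toReal_ofReal htail, Finset.sum_const,
    Finset.card_univ, Fintype.card_fun, Fintype.card_bool, Fintype.card_fin, nsmul_eq_mul]
  rw [ENNReal.ofReal_mul (by positivity), ENNReal.ofReal_pow zero_le_two, ENNReal.ofReal_ofNat]
  norm_cast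

end

theorem sumset_cantor_log_dim_zero_general
    (a : ℕ → ℝ) (hpos : ∀ n, 0 < a n) (hsum : Summable a)
    (hτ : ∀ s : ℝ, 0 < s →
      Tendsto (fun n : ℕ => (2 : ℝ) ^ n * (Real.log (1 / (∑' m, a (m + n + 1)))) ^ (-s))
        atTop (nhds 0))
    (K : Set ℝ)
    (hK : K = {x : ℝ | ∃ ε : ℕ → Bool, x = ∑' n, (if ε n then a n else 0)}) :
    ∀ s : ℝ, 0 < s → MeasureTheory.Measure.mkMetric (hGauge s) K = 0 := by
  intro s hs
  have ha0 : ∀ n, 0 ≤ a n := fun n => (hpos n).le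
  have htail : Tendsto (fun n => ∑' m, a (m + n + 1)) atTop (𝓝 0) :=
    (tendsto_sum_nat_add a).comp (tendsto_add_atTop_nat 1)
  have hmass : Tendsto (fun n => ∑ ε : Fin (n + 1) → Bool,
      hGauge s (ediam (cantorCylinder a (n + 1) ε))) atTop (𝓝 0) := by
    have hlim := ENNReal.tendsto_ofReal ((hτ s hs).const_mul 2)
    rw [mul_zero, ENNReal.ofReal_zero] at hlim
    refine hlim.congr fun n => ?_
    rw [sum_hGauge_ediam_cantorCylinder ha0, pow_succ, mul_comm _ (2 : ℝ), mul_assoc]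
    rfl -- `m + (n + 1)` and `m + n + 1` agree definitionally
  subst hK
  exact Measure.mkMetric_eq_zero_of_tendsto_sum _
    (ENNReal.ofReal_zero ▸ ENNReal.tendsto_ofReal htail) (fun n => cantorCylinder a (n + 1))
    (Eventually.of_forall fun n ε => (ediam_cantorCylinder _ ε).le)
    (Eventually.of_forall fun n => cantorSumSet_subset_iUnion_cantorCylinder ha0 hsum (n + 1))
    hmass

/-- For positive `a n` with `a n > τ n := Σ_{m>n} a m` and
`2^n (log(1/τ n))^{-s} → 0` for every `s > 0`, the Cantor set
`K = {Σ ε_n a_n : ε ∈ {0,1}^ℕ}` satisfies `H^{h_s}(K) = 0` for every `s > 0`;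
that is, `K` has logarithmic Hausdorff dimension zero. -/
theorem sumset_cantor_log_dim_zero
    (a : ℕ → ℝ) (hpos : ∀ n, 0 < a n) (hsum : Summable a)
    (hsep : ∀ n, (∑' m, a (m + n + 1)) < a n)
    (hτ : ∀ s : ℝ, 0 < s →
      Tendsto (fun n : ℕ => (2 : ℝ) ^ n * (Real.log (1 / (∑' m, a (m + n + 1)))) ^ (-s))
        atTop (nhds 0))
    (K : Set ℝ)
    (hK : K = {x : ℝ | ∃ ε : ℕ → Bool, x = ∑' n, (if ε n then a n else 0)}) :
    ∀ s : ℝ, 0 < s → MeasureTheory.Measure.mkMetric (hGauge s) K = 0 :=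
  sumset_cantor_log_dim_zero_general a hpos hsum hτ K hK
end
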